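/- arXiv:1010.2731 — 4 statements merged into one kernel-verified Lean document; each statement's English description precedes it below -/
import Mathlib

section
/- Let R be a norm on ℝ^p that is decomposable with respect to a pair of subspaces (M, B^⊥) with M ⊆ B̄. Then for any vectors θ* and Δ in ℝ^p, R(θ* + Δ) − R(θ*) ≥ R(Π_{B^⊥}(Δ)) − R(Π_{B̄}(Δ)) − 2 R(Π_{M^⊥}(θ*)), where Π denotes orthogonal projection onto the indicated subspace. -/
/-!
Split `θ* = θ_M + θ_{M⊥}` and `Δ = Δ_B + Δ_{B⊥}`. Decomposability gives
`R(θ_M + Δ_{B⊥}) = R(θ_M) + R(Δ_{B⊥})`, while `θ_M + Δ_{B⊥}` differs from `θ* + Δ` by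
`θ_{M⊥} + Δ_B`, so the triangle inequality yields `R(θ* + Δ) ≥ R(θ_M) + R(Δ_{B⊥}) − R(θ_{M⊥}) − R(Δ_B)`.
Subtracting `R(θ*) ≤ R(θ_M) + R(θ_{M⊥})` gives the claim.
-/

lemma neg_invariant_of_abs_homogeneous {E : Type*} [AddCommGroup E] [Module ℝ E] {R : E → ℝ}
    (hR_smul : ∀ (c : ℝ) (x), R (c • x) = |c| * R x) (x : E) : R (-x) = R x := by
  simpa using hR_smul (-1) x

lemma le_apply_add_add_apply {E : Type*} [AddCommGroup E] {R : E → ℝ}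
    (hR_add : ∀ x y, R (x + y) ≤ R x + R y) (hR_neg : ∀ x, R (-x) = R x) (x y : E) :
    R x ≤ R (x + y) + R y := by
  simpa [hR_neg] using hR_add (x + y) (-y)

lemma deviation_ge_of_apply_add_eq {E : Type*} [AddCommGroup E] {R : E → ℝ}
    (hR_add : ∀ x y, R (x + y) ≤ R x + R y) (hR_neg : ∀ x, R (-x) = R x) {a b c d : E}
    (had : R (a + d) = R a + R d) :
    R (a + b + (c + d)) - R (a + b) ≥ R d - R c - 2 * R b := by
  have h_total : R (a + d) ≤ R (a + b + (c + d)) + R (b + c) := by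
    have hsum : a + d + (b + c) = a + b + (c + d) := by abel
    simpa only [hsum] using le_apply_add_add_apply hR_add hR_neg (a + d) (b + c)
  linarith [hR_add a b, hR_add b c]

theorem reg_deviation_general (p : ℕ) (R : EuclideanSpace ℝ (Fin p) → ℝ)
    (hR_add : ∀ x y, R (x + y) ≤ R x + R y)
    (hR_smul : ∀ (c : ℝ) (x), R (c • x) = |c| * R x)
    (M B : Submodule ℝ (EuclideanSpace ℝ (Fin p)))
    (hdecomp : ∀ θ ∈ M, ∀ γ ∈ Bᗮ, R (θ + γ) = R θ + R γ)
    (θs Δ : EuclideanSpace ℝ (Fin p)) :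
    R (θs + Δ) - R θs ≥
      R ((Submodule.orthogonalProjectionOnto Bᗮ Δ : EuclideanSpace ℝ (Fin p)))
        - R ((Submodule.orthogonalProjectionOnto B Δ : EuclideanSpace ℝ (Fin p)))
        - 2 * R ((Submodule.orthogonalProjectionOnto Mᗮ θs : EuclideanSpace ℝ (Fin p))) := by
  have hθ : (M.orthogonalProjectionOnto θs : EuclideanSpace ℝ (Fin p))
      + Mᗮ.orthogonalProjectionOnto θs = θs := M.starProjection_add_starProjection_orthogonal θs
  have hΔ : (B.orthogonalProjectionOnto Δ : EuclideanSpace ℝ (Fin p))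
      + Bᗮ.orthogonalProjectionOnto Δ = Δ := B.starProjection_add_starProjection_orthogonal Δ
  have hsplit := hdecomp _ (M.orthogonalProjectionOnto θs).2 _ (Bᗮ.orthogonalProjectionOnto Δ).2
  have hdev := deviation_ge_of_apply_add_eq hR_add (neg_invariant_of_abs_homogeneous hR_smul)
    (b := (Mᗮ.orthogonalProjectionOnto θs : EuclideanSpace ℝ (Fin p)))
    (c := (B.orthogonalProjectionOnto Δ : EuclideanSpace ℝ (Fin p))) hsplit
  rwa [hθ, hΔ] at hdev

/-- For a decomposable norm `R` with respect to `(M, Bᗮ)` with `M ⊆ B`,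
the regularizer deviation inequality
`R(θ* + Δ) − R(θ*) ≥ R(Π_{Bᗮ} Δ) − R(Π_B Δ) − 2 R(Π_{Mᗮ} θ*)` holds. -/
theorem reg_deviation (p : ℕ) (R : EuclideanSpace ℝ (Fin p) → ℝ)
    (hR_nonneg : ∀ x, 0 ≤ R x)
    (hR_add : ∀ x y, R (x + y) ≤ R x + R y)
    (hR_smul : ∀ (c : ℝ) (x), R (c • x) = |c| * R x)
    (hR_def : ∀ x, R x = 0 ↔ x = 0)
    (M B : Submodule ℝ (EuclideanSpace ℝ (Fin p))) (hMB : M ≤ B)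
    (hdecomp : ∀ θ ∈ M, ∀ γ ∈ Bᗮ, R (θ + γ) = R θ + R γ)
    (θs Δ : EuclideanSpace ℝ (Fin p)) :
    R (θs + Δ) - R θs ≥
      R ((Submodule.orthogonalProjectionOnto Bᗮ Δ : EuclideanSpace ℝ (Fin p)))
        - R ((Submodule.orthogonalProjectionOnto B Δ : EuclideanSpace ℝ (Fin p)))
        - 2 * R ((Submodule.orthogonalProjectionOnto Mᗮ θs : EuclideanSpace ℝ (Fin p))) :=
  reg_deviation_general p R hR_add hR_smul M B hdecomp θs Δ
end

section
/- Let L : ℝ^p → ℝ be convex and differentiable, R a norm decomposable with respect to subspaces (M, B^⊥) with M ⊆ B̄, and λ > 0 with λ ≥ 2 R*(∇L(θ*)). Then for any minimizer θ̂ of θ ↦ L(θ) + λ R(θ), the error Δ̂ = θ̂ − θ* satisfies R(Π_{B^⊥}(Δ̂)) ≤ 3 R(Π_{B̄}(Δ̂)) + 4 R(Π_{M^⊥}(θ*)). -/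
/-!
By convexity, `L θ̂ - L θ* ≥ ⟪∇L(θ*), Δ̂⟫ ≥ -R*(∇L(θ*)) R(Δ̂) ≥ -(λ/2) R(Δ̂)`, so minimality of `θ̂`
gives `R(θ̂) ≤ R(θ*) + R(Δ̂)/2`. Splitting `θ̂ = (Π_M θ* + Π_{Bᗮ} Δ̂) + (Π_{Mᗮ} θ* + Π_B Δ̂)`,
decomposability evaluates `R` exactly on the first summand, and the triangle inequality does the rest.
-/

open scoped RealInnerProductSpace

theorem ConvexOn.add_fderiv_sub_le {E : Type*} [NormedAddCommGroup E] [NormedSpace ℝ E]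
    {f : E → ℝ} {f' : E →L[ℝ] ℝ} {s : Set E} {x y : E} (hf : ConvexOn ℝ s f)
    (hx : x ∈ s) (hy : y ∈ s) (hf' : HasFDerivAt f f' x) : f x + f' (y - x) ≤ f y := by
  let ℓ : ℝ →ᵃ[ℝ] E := AffineMap.lineMap x y
  have hℓ0 : ℓ 0 = x := AffineMap.lineMap_apply_zero x y
  have hℓ1 : ℓ 1 = y := AffineMap.lineMap_apply_one x y
  have hline : ConvexOn ℝ (ℓ ⁻¹' s) (f ∘ ℓ) := hf.comp_affineMap ℓ
  have hderiv : HasDerivAt (f ∘ ℓ) (f' (y - x)) 0 :=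
    (hℓ0 ▸ hf').comp_hasDerivAt 0 AffineMap.hasDerivAt_lineMap
  have hslope := hline.le_slope_of_hasDerivAt (by simpa [hℓ0] using hx) (by simpa [hℓ1] using hy)
    zero_lt_one hderiv
  rw [slope_def_field, Function.comp_apply, Function.comp_apply, hℓ0, hℓ1, sub_zero,
    div_one] at hslope
  linarith

theorem ConvexOn.add_inner_gradient_le {E : Type*} [NormedAddCommGroup E] [InnerProductSpace ℝ E]
    [CompleteSpace E] {f : E → ℝ} {s : Set E} {x y : E} (hf : ConvexOn ℝ s f)
    (hx : x ∈ s) (hy : y ∈ s) (hd : DifferentiableAt ℝ f x) :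
    f x + ⟪gradient f x, y - x⟫ ≤ f y :=
  hf.add_fderiv_sub_le hx hy hd.hasGradientAt.hasFDerivAt

section FiniteDimensional

variable {E : Type*} [NormedAddCommGroup E] [NormedSpace ℝ E] [FiniteDimensional ℝ E]

theorem Seminorm.continuous_of_finiteDimensional (p : Seminorm ℝ E) : Continuous p :=
  p.convexOn.locallyLipschitz.continuous

theorem Seminorm.exists_norm_le_mul (p : Seminorm ℝ E) (hp : ∀ x, p x = 0 → x = 0) :
    ∃ C, 0 < C ∧ ∀ x, ‖x‖ ≤ C * p x := by
  rcases subsingleton_or_nontrivial E with hE | hE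
  · exact ⟨1, one_pos, fun x => by simp [Subsingleton.elim x 0]⟩
  obtain ⟨w, hw, hmin⟩ := (isCompact_sphere (0 : E) 1).exists_isMinOn
    (NormedSpace.sphere_nonempty.2 zero_le_one) p.continuous_of_finiteDimensional.continuousOn
  have hw0 : w ≠ 0 := ne_zero_of_mem_unit_sphere ⟨w, hw⟩
  have hpw : 0 < p w := (apply_nonneg p w).lt_of_ne' (mt (hp w) hw0)
  refine ⟨(p w)⁻¹, inv_pos.2 hpw, fun x => ?_⟩
  rcases eq_or_ne x 0 with rfl | hx
  · simp
  have hxn : 0 < ‖x‖ := norm_pos_iff.2 hx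
  have hle : p w ≤ ‖x‖⁻¹ * p x := by
    simpa [map_smul_eq_mul, hxn.ne'] using hmin (a := ‖x‖⁻¹ • x) (by simp [norm_smul, hxn.ne'])
  rw [inv_mul_eq_div, le_div_iff₀ hpw]
  rwa [le_inv_mul_iff₀ hxn] at hle

end FiniteDimensional

section Dual

variable {E : Type*} [NormedAddCommGroup E] [InnerProductSpace ℝ E]

noncomputable def dualNorm (R : E → ℝ) (g : E) : ℝ :=
  sSup {x : ℝ | ∃ u, R u ≤ 1 ∧ x = ⟪u, g⟫}

variable [FiniteDimensional ℝ E] (p : Seminorm ℝ E) (hp : ∀ x, p x = 0 → x = 0) (g : E)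
include hp

-- Needed because `sSup` of a set unbounded above is the junk value `0`.
theorem Seminorm.bddAbove_inner_unitBall : BddAbove {x : ℝ | ∃ u, p u ≤ 1 ∧ x = ⟪u, g⟫} := by
  obtain ⟨C, hC, hnorm⟩ := p.exists_norm_le_mul hp
  refine ⟨C * ‖g‖, ?_⟩
  rintro _ ⟨u, hu, rfl⟩
  calc ⟪u, g⟫ ≤ ‖u‖ * ‖g‖ := real_inner_le_norm u g
    _ ≤ C * p u * ‖g‖ := by gcongr; exact hnorm u
    _ ≤ C * ‖g‖ := mul_le_mul_of_nonneg_right (mul_le_of_le_one_right hC.le hu) (norm_nonneg g)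

theorem Seminorm.inner_le_dualNorm_mul (v : E) : ⟪v, g⟫ ≤ dualNorm p g * p v := by
  rcases eq_or_ne (p v) 0 with hv | hv
  · simp [hp v hv]
  have hpv : 0 < p v := (apply_nonneg p v).lt_of_ne' hv
  have hmem : (p v)⁻¹ * ⟪v, g⟫ ∈ {x : ℝ | ∃ u, p u ≤ 1 ∧ x = ⟪u, g⟫} :=
    ⟨(p v)⁻¹ • v, by simp [map_smul_eq_mul, abs_of_pos hpv, hv], by rw [real_inner_smul_left]⟩
  have := le_csSup (p.bddAbove_inner_unitBall hp g) hmem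
  rwa [inv_mul_le_iff₀ hpv, mul_comm] at this

end Dual

theorem Seminorm.apply_minimizer_le {E : Type*} [NormedAddCommGroup E] [InnerProductSpace ℝ E]
    [FiniteDimensional ℝ E] (p : Seminorm ℝ E) (hp : ∀ x, p x = 0 → x = 0) {L : E → ℝ}
    (hconv : ConvexOn ℝ Set.univ L) {θs θhat : E} (hdiff : DifferentiableAt ℝ L θs)
    {lam : ℝ} (hlam_pos : 0 < lam) (hlam : 2 * dualNorm p (gradient L θs) ≤ lam)
    (hmin : L θhat + lam * p θhat ≤ L θs + lam * p θs) :
    p θhat ≤ p θs + 1 / 2 * p (θhat - θs) := by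
  have hfirst : L θs + ⟪gradient L θs, θhat - θs⟫ ≤ L θhat :=
    hconv.add_inner_gradient_le trivial trivial hdiff
  have hdual : ⟪θs - θhat, gradient L θs⟫ ≤ lam / 2 * p (θhat - θs) :=
    calc _ ≤ dualNorm p (gradient L θs) * p (θs - θhat) := p.inner_le_dualNorm_mul hp _ _
      _ = dualNorm p (gradient L θs) * p (θhat - θs) := by rw [← map_neg_eq_map, neg_sub]
      _ ≤ lam / 2 * p (θhat - θs) := by gcongr; linarith
  have hflip : ⟪θs - θhat, gradient L θs⟫ = -⟪gradient L θs, θhat - θs⟫ := by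
    rw [real_inner_comm, ← inner_neg_right, neg_sub]
  refine le_of_mul_le_mul_left ?_ hlam_pos
  linarith

def IsDecomposable {E : Type*} [NormedAddCommGroup E] [InnerProductSpace ℝ E] (R : E → ℝ)
    (M B : Submodule ℝ E) : Prop :=
  ∀ θ ∈ M, ∀ γ ∈ Bᗮ, R (θ + γ) = R θ + R γ

theorem IsDecomposable.proj_orthogonal_le {E : Type*} [NormedAddCommGroup E]
    [InnerProductSpace ℝ E] {p : Seminorm ℝ E} {M B : Submodule ℝ E} [M.HasOrthogonalProjection]
    [B.HasOrthogonalProjection] (h : IsDecomposable p M B) {θs θhat : E}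
    (hle : p θhat ≤ p θs + 1 / 2 * p (θhat - θs)) :
    p (Bᗮ.orthogonalProjectionOnto (θhat - θs) : E) ≤
      3 * p (B.orthogonalProjectionOnto (θhat - θs) : E) +
        4 * p (Mᗮ.orthogonalProjectionOnto θs : E) := by
  set ΔB : E := ↑(B.orthogonalProjectionOnto (θhat - θs))
  set ΔBp : E := ↑(Bᗮ.orthogonalProjectionOnto (θhat - θs))
  set θM : E := ↑(M.orthogonalProjectionOnto θs)
  set θMp : E := ↑(Mᗮ.orthogonalProjectionOnto θs)
  have hΔ : ΔB + ΔBp = θhat - θs := B.starProjection_add_starProjection_orthogonal _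
  have hθ : θM + θMp = θs := M.starProjection_add_starProjection_orthogonal _
  have hdec : p (θM + ΔBp) = p θM + p ΔBp := h θM (SetLike.coe_mem _) ΔBp (SetLike.coe_mem _)
  have hlow : p (θM + ΔBp) ≤ p θhat + p (θMp + ΔB) := by
    have : θM + ΔBp = θhat - (θMp + ΔB) := by linear_combination (norm := module) hθ + hΔ
    exact this ▸ map_sub_le_add p _ _
  have hθs : p θs ≤ p θM + p θMp := hθ ▸ map_add_le_add p _ _
  have hΔs : p (θhat - θs) ≤ p ΔB + p ΔBp := hΔ ▸ map_add_le_add p _ _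
  linarith [map_add_le_add p θMp ΔB]

theorem error_in_cone_general (p : ℕ) (L R : EuclideanSpace ℝ (Fin p) → ℝ)
    (hR_add : ∀ x y, R (x + y) ≤ R x + R y)
    (hR_smul : ∀ (c : ℝ) (x), R (c • x) = |c| * R x)
    (hR_def : ∀ x, R x = 0 ↔ x = 0)
    (M B : Submodule ℝ (EuclideanSpace ℝ (Fin p)))
    (hdecomp : ∀ θ ∈ M, ∀ γ ∈ Bᗮ, R (θ + γ) = R θ + R γ)
    (hconv : ConvexOn ℝ Set.univ L) (hdiff : Differentiable ℝ L)
    (θs θhat : EuclideanSpace ℝ (Fin p)) (lam : ℝ) (hlam_pos : 0 < lam)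
    (hlam : 2 * sSup {x : ℝ | ∃ u, R u ≤ 1 ∧
        x = @inner ℝ _ _ u (gradient L θs)} ≤ lam)
    (hmin : ∀ θ, L θhat + lam * R θhat ≤ L θ + lam * R θ) :
    R ((Submodule.orthogonalProjectionOnto Bᗮ (θhat - θs) : EuclideanSpace ℝ (Fin p))) ≤
      3 * R ((Submodule.orthogonalProjectionOnto B (θhat - θs) : EuclideanSpace ℝ (Fin p))) +
        4 * R ((Submodule.orthogonalProjectionOnto Mᗮ θs : EuclideanSpace ℝ (Fin p))) := by
  let ρ : Seminorm ℝ (EuclideanSpace ℝ (Fin p)) := Seminorm.of R hR_add hR_smul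
  have hbasic : ρ θhat ≤ ρ θs + 1 / 2 * ρ (θhat - θs) :=
    ρ.apply_minimizer_le (fun x => (hR_def x).1) hconv (hdiff θs) hlam_pos hlam (hmin θs)
  exact IsDecomposable.proj_orthogonal_le (p := ρ) hdecomp hbasic

/-- Lemma 1 of the paper: for a decomposable regularizer and `λ ≥ 2R*(∇L(θ*))`,
the error `Δ̂ = θ̂ − θ*` of any minimizer of `L + λR` satisfies
`R(Π_{Bᗮ} Δ̂) ≤ 3 R(Π_B Δ̂) + 4 R(Π_{Mᗮ} θ*)`. -/
theorem error_in_cone (p : ℕ) (L R : EuclideanSpace ℝ (Fin p) → ℝ)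
    (hR_nonneg : ∀ x, 0 ≤ R x)
    (hR_add : ∀ x y, R (x + y) ≤ R x + R y)
    (hR_smul : ∀ (c : ℝ) (x), R (c • x) = |c| * R x)
    (hR_def : ∀ x, R x = 0 ↔ x = 0)
    (M B : Submodule ℝ (EuclideanSpace ℝ (Fin p))) (hMB : M ≤ B)
    (hdecomp : ∀ θ ∈ M, ∀ γ ∈ Bᗮ, R (θ + γ) = R θ + R γ)
    (hconv : ConvexOn ℝ Set.univ L) (hdiff : Differentiable ℝ L)
    (θs θhat : EuclideanSpace ℝ (Fin p)) (lam : ℝ) (hlam_pos : 0 < lam)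
    (hlam : 2 * sSup {x : ℝ | ∃ u, R u ≤ 1 ∧
        x = @inner ℝ _ _ u (gradient L θs)} ≤ lam)
    (hmin : ∀ θ, L θhat + lam * R θhat ≤ L θ + lam * R θ) :
    R ((Submodule.orthogonalProjectionOnto Bᗮ (θhat - θs) : EuclideanSpace ℝ (Fin p))) ≤
      3 * R ((Submodule.orthogonalProjectionOnto B (θhat - θs) : EuclideanSpace ℝ (Fin p))) +
        4 * R ((Submodule.orthogonalProjectionOnto Mᗮ θs : EuclideanSpace ℝ (Fin p))) :=
  error_in_cone_general p L R hR_add hR_smul hR_def M B hdecomp hconv hdiff θs θhat lam hlam_pos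
    hlam hmin
end

section
/- (Exactly sparse case of the main theorem.) Under the hypotheses of the preceding theorem with additionally θ* ∈ M and τ = 0, any minimizer θ̂ of L(θ) + λR(θ) satisfies ‖θ̂ − θ*‖² ≤ 9(λ²/κ²)Ψ(B̄)² and R(θ̂ − θ*) ≤ 12(λ/κ)Ψ(B̄)². -/
/-!
Write `Δ = θ̂ - θ*` and split it as `Δ_B + Δ_⊥` along `B ⊕ Bᗮ`. Decomposability at `θ* ∈ M`
gives `R θ̂ ≥ R θ* + R Δ_⊥ - R Δ_B`, while convexity of `L` and `λ ≥ 2 R*(∇L θ*)` give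
`L θ* - L θ̂ ≤ (λ / 2) (R Δ_B + R Δ_⊥)`. Comparing with the optimality of `θ̂` puts `Δ` in the
cone `R Δ_⊥ ≤ 3 R Δ_B` and bounds the first-order excess of `L` at `θ*` by `(3 / 2) λ R Δ_B`,
so restricted strong convexity yields `κ ‖Δ‖² ≤ (3 / 2) λ Ψ ‖Δ‖`. Finite dimensionality enters
only through the equivalence of `R` with the Euclidean norm, which makes the suprema defining
`R*` and `Ψ` finite.
-/

open Set
open scoped RealInnerProductSpace

theorem ConvexOn.le_sub_of_hasFDerivAt {E : Type*} [NormedAddCommGroup E] [NormedSpace ℝ E]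
    {s : Set E} {f : E → ℝ} {f' : E →L[ℝ] ℝ} {x y : E} (hf : ConvexOn ℝ s f) (hx : x ∈ s)
    (hy : y ∈ s) (hf' : HasFDerivAt f f' x) : f' (y - x) ≤ f y - f x := by
  set ℓ : ℝ →ᵃ[ℝ] E := AffineMap.lineMap x y
  have hline : ConvexOn ℝ (Icc 0 1) (f ∘ ℓ) :=
    (hf.comp_affineMap _).subset (fun t ht => hf.1.lineMap_mem hx hy ht) (convex_Icc 0 1)
  have hderiv : HasDerivAt (f ∘ ℓ) (f' (y - x)) 0 :=
    HasFDerivAt.comp_hasDerivAt 0 (by simpa [ℓ] using hf') AffineMap.hasDerivAt_lineMap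
  simpa [ℓ, slope_def_field] using
    hline.le_slope_of_hasDerivAt (by simp) (by simp) zero_lt_one hderiv

theorem ConvexOn.inner_gradient_le_sub {E : Type*} [NormedAddCommGroup E] [InnerProductSpace ℝ E]
    [CompleteSpace E] {s : Set E} {f : E → ℝ} {g x y : E} (hf : ConvexOn ℝ s f) (hx : x ∈ s)
    (hy : y ∈ s) (hg : HasGradientAt f g x) : ⟪g, y - x⟫ ≤ f y - f x := by
  simpa using hf.le_sub_of_hasFDerivAt hx hy (hasGradientAt_iff_hasFDerivAt.mp hg)

namespace Seminorm

section Normed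

variable {E : Type*} [NormedAddCommGroup E] [NormedSpace ℝ E] (p : Seminorm ℝ E)

theorem continuous_of_finiteDimensional_s11 [FiniteDimensional ℝ E] : Continuous p :=
  continuousOn_univ.mp (p.convexOn.continuousOn isOpen_univ)

theorem exists_pos_mul_norm_le [FiniteDimensional ℝ E] (hp : ∀ x, p x = 0 → x = 0) :
    ∃ m, 0 < m ∧ ∀ x, m * ‖x‖ ≤ p x := by
  rcases subsingleton_or_nontrivial E with _ | _
  · exact ⟨1, one_pos, fun x => by simp [Subsingleton.elim x 0]⟩
  obtain ⟨z, hz, hmin⟩ := (isCompact_sphere (0 : E) 1).exists_isMinOn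
    (NormedSpace.sphere_nonempty.mpr zero_le_one) p.continuous_of_finiteDimensional_s11.continuousOn
  have hz1 : ‖z‖ = 1 := by simpa using hz
  have hpz : 0 < p z := (apply_nonneg p z).lt_of_ne' fun h => by simp [hp z h] at hz1
  refine ⟨p z, hpz, fun x => ?_⟩
  rcases eq_or_ne x 0 with rfl | hx
  · simp
  have hx' : 0 < ‖x‖ := norm_pos_iff.mpr hx
  have h : p z ≤ p (‖x‖⁻¹ • x) := hmin (by simp [norm_smul, hx'.ne'])
  rw [map_smul_eq_mul, norm_inv, norm_norm, le_inv_mul_iff₀ hx'] at h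
  linarith

noncomputable def compatConst (B : Submodule ℝ E) : ℝ :=
  sSup {x : ℝ | ∃ u ∈ B, u ≠ 0 ∧ x = p u / ‖u‖}

theorem compatConst_nonneg (B : Submodule ℝ E) : 0 ≤ p.compatConst B :=
  Real.sSup_nonneg (by rintro _ ⟨u, -, -, rfl⟩; exact div_nonneg (apply_nonneg p u) (norm_nonneg u))

theorem le_compatConst_mul_norm [FiniteDimensional ℝ E] {B : Submodule ℝ E} {u : E} (hu : u ∈ B) :
    p u ≤ p.compatConst B * ‖u‖ := by
  obtain ⟨C, hC0, hC⟩ := p.bound_of_continuous_normedSpace p.continuous_of_finiteDimensional_s11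
  rcases eq_or_ne u 0 with rfl | hu0
  · simp
  have hbdd : BddAbove {x : ℝ | ∃ u ∈ B, u ≠ 0 ∧ x = p u / ‖u‖} := by
    refine ⟨C, ?_⟩
    rintro _ ⟨v, -, hv, rfl⟩
    exact div_le_of_le_mul₀ (norm_nonneg v) hC0.le (hC v)
  rw [← div_le_iff₀ (norm_pos_iff.mpr hu0)]
  exact le_csSup hbdd ⟨u, hu, hu0, rfl⟩

end Normed

section Inner

variable {E : Type*} [NormedAddCommGroup E] [InnerProductSpace ℝ E] (p : Seminorm ℝ E)

noncomputable def dualNorm (g : E) : ℝ := sSup {x : ℝ | ∃ u, p u ≤ 1 ∧ x = ⟪u, g⟫}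

theorem inner_le_dualNorm_mul_s11 [FiniteDimensional ℝ E] (hp : ∀ x, p x = 0 → x = 0) (g v : E) :
    ⟪v, g⟫ ≤ p.dualNorm g * p v := by
  obtain ⟨m, hm, hmp⟩ := p.exists_pos_mul_norm_le hp
  have hbdd : BddAbove {x : ℝ | ∃ u, p u ≤ 1 ∧ x = ⟪u, g⟫} := by
    refine ⟨‖g‖ / m, ?_⟩
    rintro _ ⟨u, hu, rfl⟩
    rw [le_div_iff₀ hm]
    calc ⟪u, g⟫ * m ≤ ‖u‖ * ‖g‖ * m := by gcongr; exact real_inner_le_norm u g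
      _ = m * ‖u‖ * ‖g‖ := by ring
      _ ≤ 1 * ‖g‖ := by gcongr; exact (hmp u).trans hu
      _ = ‖g‖ := one_mul _
  rcases (apply_nonneg p v).eq_or_lt with hv | hv
  · simp [hp v hv.symm]
  have hmem : ⟪(p v)⁻¹ • v, g⟫ ∈ {x : ℝ | ∃ u, p u ≤ 1 ∧ x = ⟪u, g⟫} :=
    ⟨_, by rw [map_smul_eq_mul, norm_inv, Real.norm_of_nonneg hv.le, inv_mul_cancel₀ hv.ne'], rfl⟩
  have h := le_csSup hbdd hmem
  rw [real_inner_smul_left, inv_mul_le_iff₀ hv] at h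
  rwa [mul_comm] at h

theorem le_orthogonalProjectionOnto_add (K : Submodule ℝ E) [K.HasOrthogonalProjection] (v : E) :
    p v ≤ p (K.orthogonalProjectionOnto v) + p (Kᗮ.orthogonalProjectionOnto v) := by
  conv_lhs => rw [← K.starProjection_add_starProjection_orthogonal v]
  exact map_add_le_add p _ _

theorem add_sub_le_of_decomposable {M B : Submodule ℝ E} [B.HasOrthogonalProjection]
    (hdecomp : ∀ θ ∈ M, ∀ γ ∈ Bᗮ, p (θ + γ) = p θ + p γ) {θ : E} (hθ : θ ∈ M) (Δ : E) :
    p θ + p (Bᗮ.orthogonalProjectionOnto Δ) - p (B.orthogonalProjectionOnto Δ) ≤ p (θ + Δ) := by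
  have h := map_add_le_add p (θ + Δ) (-(B.orthogonalProjectionOnto Δ : E))
  have hsplit :
      θ + Δ + -(B.orthogonalProjectionOnto Δ : E) = θ + Bᗮ.orthogonalProjectionOnto Δ := by
    show θ + Δ + -B.starProjection Δ = θ + Bᗮ.starProjection Δ
    rw [eq_sub_of_add_eq' (B.starProjection_add_starProjection_orthogonal Δ)]
    abel
  rw [map_neg_eq_map, hsplit, hdecomp θ hθ _ (Submodule.coe_mem _)] at h
  linarith

theorem cone_and_excess_le_of_minimizer [CompleteSpace E] {M B : Submodule ℝ E}
    [B.HasOrthogonalProjection] (hdecomp : ∀ θ ∈ M, ∀ γ ∈ Bᗮ, p (θ + γ) = p θ + p γ) {L : E → ℝ}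
    (hL : ConvexOn ℝ univ L) {g θs θhat : E} (hg : HasGradientAt L g θs) (hθs : θs ∈ M)
    {lam : ℝ} (hlam : 0 < lam) (hdual : ∀ v, ⟪v, g⟫ ≤ lam / 2 * p v)
    (hmin : L θhat + lam * p θhat ≤ L θs + lam * p θs) :
    p (Bᗮ.orthogonalProjectionOnto (θhat - θs)) ≤ 3 * p (B.orthogonalProjectionOnto (θhat - θs)) ∧
      L θhat - L θs - ⟪g, θhat - θs⟫ ≤
        3 / 2 * lam * p (B.orthogonalProjectionOnto (θhat - θs)) := by
  set Δ := θhat - θs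
  set a := p (B.orthogonalProjectionOnto Δ)
  set b := p (Bᗮ.orthogonalProjectionOnto Δ)
  have hdecomp_lb : p θs + b - a ≤ p θhat := by
    simpa only [Δ, add_sub_cancel] using p.add_sub_le_of_decomposable hdecomp hθs Δ
  have hbasic : L θhat - L θs ≤ lam * (a - b) := by
    linarith [mul_le_mul_of_nonneg_left hdecomp_lb hlam.le]
  have hlinear : -⟪g, Δ⟫ ≤ lam / 2 * (a + b) :=
    calc -⟪g, Δ⟫ = ⟪-Δ, g⟫ := by rw [inner_neg_left, real_inner_comm]
      _ ≤ lam / 2 * p Δ := by simpa using hdual (-Δ)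
      _ ≤ lam / 2 * (a + b) := by gcongr; exact p.le_orthogonalProjectionOnto_add B Δ
  have hgrad : ⟪g, Δ⟫ ≤ L θhat - L θs := hL.inner_gradient_le_sub trivial trivial hg
  have hb : 0 ≤ lam * b := mul_nonneg hlam.le (apply_nonneg p _)
  exact ⟨le_of_mul_le_mul_left (by linarith) (half_pos hlam), by linarith⟩

end Inner

end Seminorm

theorem le_div_of_mul_sq_le_mul {κ c x : ℝ} (hκ : 0 < κ) (hc : 0 ≤ c) (hx : 0 ≤ x)
    (h : κ * x ^ 2 ≤ c * x) : x ≤ c / κ := by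
  rw [le_div_iff₀' hκ]
  rcases hx.eq_or_lt with rfl | hx
  · simpa using hc
  · nlinarith

theorem sq_le_and_le_of_mul_sq_le {κ lam Ψ x a r : ℝ} (hκ : 0 < κ) (hlam : 0 ≤ lam) (hΨ : 0 ≤ Ψ)
    (hx : 0 ≤ x) (hcurv : κ * x ^ 2 ≤ 3 / 2 * lam * a) (ha : a ≤ Ψ * x) (hr : r ≤ 4 * a) :
    x ^ 2 ≤ 9 * (lam ^ 2 / κ ^ 2) * Ψ ^ 2 ∧ r ≤ 12 * (lam / κ) * Ψ ^ 2 := by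
  have hx_le : x ≤ 3 / 2 * lam * Ψ / κ :=
    le_div_of_mul_sq_le_mul hκ (by positivity) hx (by nlinarith)
  constructor
  · calc x ^ 2 ≤ (3 / 2 * lam * Ψ / κ) ^ 2 := by gcongr
      _ = 9 / 4 * (lam ^ 2 / κ ^ 2) * Ψ ^ 2 := by ring
      _ ≤ 9 * (lam ^ 2 / κ ^ 2) * Ψ ^ 2 := by gcongr; norm_num
  · calc r ≤ 4 * (Ψ * (3 / 2 * lam * Ψ / κ)) := hr.trans (by gcongr; exact ha.trans (by gcongr))
      _ = 6 * (lam / κ) * Ψ ^ 2 := by ring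
      _ ≤ 12 * (lam / κ) * Ψ ^ 2 := by gcongr; norm_num

theorem corollary_exact_general (p : ℕ) (L R : EuclideanSpace ℝ (Fin p) → ℝ)
    (hR_add : ∀ x y, R (x + y) ≤ R x + R y)
    (hR_smul : ∀ (c : ℝ) (x), R (c • x) = |c| * R x)
    (hR_def : ∀ x, R x = 0 ↔ x = 0)
    (M B : Submodule ℝ (EuclideanSpace ℝ (Fin p)))
    (hdecomp : ∀ θ ∈ M, ∀ γ ∈ Bᗮ, R (θ + γ) = R θ + R γ)
    (hconv : ConvexOn ℝ Set.univ L) (hdiff : Differentiable ℝ L)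
    (θs θhat : EuclideanSpace ℝ (Fin p)) (hθs : θs ∈ M) (lam κ : ℝ)
    (hlam_pos : 0 < lam) (hκ : 0 < κ)
    (hlam : 2 * sSup {x : ℝ | ∃ u, R u ≤ 1 ∧
        x = @inner ℝ _ _ u (gradient L θs)} ≤ lam)
    (hRSC : ∀ Δ : EuclideanSpace ℝ (Fin p),
      R ((Submodule.orthogonalProjectionOnto Bᗮ Δ : EuclideanSpace ℝ (Fin p))) ≤
          3 * R ((Submodule.orthogonalProjectionOnto B Δ : EuclideanSpace ℝ (Fin p))) →
        L (θs + Δ) - L θs - @inner ℝ _ _ (gradient L θs) Δ ≥ κ * ‖Δ‖ ^ 2)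
    (hmin : ∀ θ, L θhat + lam * R θhat ≤ L θ + lam * R θ) :
    ‖θhat - θs‖ ^ 2 ≤
        9 * (lam ^ 2 / κ ^ 2) *
          (sSup {x : ℝ | ∃ u ∈ B, u ≠ 0 ∧ x = R u / ‖u‖}) ^ 2 ∧
      R (θhat - θs) ≤
        12 * (lam / κ) * (sSup {x : ℝ | ∃ u ∈ B, u ≠ 0 ∧ x = R u / ‖u‖}) ^ 2 := by
  let ρ : Seminorm ℝ (EuclideanSpace ℝ (Fin p)) :=
    Seminorm.of R hR_add fun c x => by rw [Real.norm_eq_abs]; exact hR_smul c x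
  change 2 * ρ.dualNorm (gradient L θs) ≤ lam at hlam
  change _ ≤ _ * ρ.compatConst B ^ 2 ∧ ρ _ ≤ _ * ρ.compatConst B ^ 2
  have hdual (v) : ⟪v, gradient L θs⟫ ≤ lam / 2 * ρ v :=
    (ρ.inner_le_dualNorm_mul_s11 (fun x => (hR_def x).mp) _ v).trans (by gcongr; linarith)
  obtain ⟨hcone, hexcess⟩ := ρ.cone_and_excess_le_of_minimizer hdecomp hconv
    (hdiff θs).hasGradientAt hθs hlam_pos hdual (hmin θs)
  have hcurv := hRSC _ hcone
  rw [add_sub_cancel] at hcurv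
  have hΔB : ρ (B.orthogonalProjectionOnto (θhat - θs)) ≤ ρ.compatConst B * ‖θhat - θs‖ :=
    (ρ.le_compatConst_mul_norm (Submodule.coe_mem _)).trans
      (by gcongr; exacts [ρ.compatConst_nonneg B, B.norm_orthogonalProjectionOnto_apply_le _])
  exact sq_le_and_le_of_mul_sq_le hκ hlam_pos.le (ρ.compatConst_nonneg B) (norm_nonneg _)
    (hcurv.trans hexcess) hΔB (by linarith [ρ.le_orthogonalProjectionOnto_add B (θhat - θs)])

/-- Corollary for the exactly sparse case: if moreover `θ* ∈ M` and the RSC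
tolerance is zero over the cone `{Δ : R(Π_{Bᗮ}Δ) ≤ 3R(Π_B Δ)}`, then any
minimizer `θ̂` of `L + λR` satisfies `‖θ̂ − θ*‖² ≤ 9(λ²/κ²)Ψ(B)²` and
`R(θ̂ − θ*) ≤ 12(λ/κ)Ψ(B)²`. -/
theorem corollary_exact (p : ℕ) (L R : EuclideanSpace ℝ (Fin p) → ℝ)
    (hR_nonneg : ∀ x, 0 ≤ R x)
    (hR_add : ∀ x y, R (x + y) ≤ R x + R y)
    (hR_smul : ∀ (c : ℝ) (x), R (c • x) = |c| * R x)
    (hR_def : ∀ x, R x = 0 ↔ x = 0)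
    (M B : Submodule ℝ (EuclideanSpace ℝ (Fin p))) (hMB : M ≤ B)
    (hdecomp : ∀ θ ∈ M, ∀ γ ∈ Bᗮ, R (θ + γ) = R θ + R γ)
    (hconv : ConvexOn ℝ Set.univ L) (hdiff : Differentiable ℝ L)
    (θs θhat : EuclideanSpace ℝ (Fin p)) (hθs : θs ∈ M) (lam κ : ℝ)
    (hlam_pos : 0 < lam) (hκ : 0 < κ)
    (hlam : 2 * sSup {x : ℝ | ∃ u, R u ≤ 1 ∧
        x = @inner ℝ _ _ u (gradient L θs)} ≤ lam)
    (hRSC : ∀ Δ : EuclideanSpace ℝ (Fin p),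
      R ((Submodule.orthogonalProjectionOnto Bᗮ Δ : EuclideanSpace ℝ (Fin p))) ≤
          3 * R ((Submodule.orthogonalProjectionOnto B Δ : EuclideanSpace ℝ (Fin p))) →
        L (θs + Δ) - L θs - @inner ℝ _ _ (gradient L θs) Δ ≥ κ * ‖Δ‖ ^ 2)
    (hmin : ∀ θ, L θhat + lam * R θhat ≤ L θ + lam * R θ) :
    ‖θhat - θs‖ ^ 2 ≤
        9 * (lam ^ 2 / κ ^ 2) *
          (sSup {x : ℝ | ∃ u ∈ B, u ≠ 0 ∧ x = R u / ‖u‖}) ^ 2 ∧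
      R (θhat - θs) ≤
        12 * (lam / κ) * (sSup {x : ℝ | ∃ u ∈ B, u ≠ 0 ∧ x = R u / ‖u‖}) ^ 2 :=
  corollary_exact_general p L R hR_add hR_smul hR_def M B hdecomp hconv hdiff θs θhat hθs lam κ
    hlam_pos hκ hlam hRSC hmin
end

section
/- Let R be a norm on ℝ^p with subspace compatibility constant Ψ(B̄) = sup{R(u)/‖u‖₂ : u ∈ B̄, u ≠ 0} for a subspace B̄, and suppose θ* ∈ M ⊆ B̄ and Δ satisfies R(Π_{B^⊥}Δ) ≤ 3R(Π_{B̄}Δ). Then R(Δ) ≤ 4Ψ(B̄)‖Δ‖₂. Consequently, if δL(Δ) ≥ κ₁‖Δ‖₂² − κ₂ g(n,p) R(Δ)² holds, then δL(Δ) ≥ (κ₁ − 16κ₂ Ψ(B̄)² g(n,p)) ‖Δ‖₂². -/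
/-!
Split `Δ = Π_B Δ + Π_{Bᗮ} Δ`. The cone condition and the triangle inequality give
`R Δ ≤ 4 R (Π_B Δ)`, and on `B` the compatibility constant bounds `R` by `Ψ(B) ‖·‖`; as orthogonal
projection does not increase the norm, `R Δ ≤ 4 Ψ(B) ‖Δ‖`. Squaring this turns the term
`κ₂ g R(Δ)²` of the lower bound into `16 κ₂ Ψ(B)² g ‖Δ‖²`.

The supremum defining `Ψ(B)` is a genuine one (not the junk value `sSup = 0` of an unbounded set)
because a seminorm is convex, hence continuous in finite dimension, hence bounded by `C ‖·‖`.
-/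

open Submodule

namespace Seminorm

variable {E : Type*} [NormedAddCommGroup E] [NormedSpace ℝ E] [FiniteDimensional ℝ E]

theorem continuous_of_finiteDimensional_s19 (R : Seminorm ℝ E) : Continuous R :=
  continuousOn_univ.mp (R.convexOn.continuousOn isOpen_univ)

theorem exists_le_mul_norm_of_finiteDimensional (R : Seminorm ℝ E) :
    ∃ C, 0 < C ∧ ∀ x, R x ≤ C * ‖x‖ :=
  bound_of_continuous_normedSpace R R.continuous_of_finiteDimensional_s19

end Seminorm

section CompatibilityConstant

variable {E : Type*} [NormedAddCommGroup E] [InnerProductSpace ℝ E]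

noncomputable def compatibilityConstant (R : E → ℝ) (B : Submodule ℝ E) : ℝ :=
  sSup {x : ℝ | ∃ u ∈ B, u ≠ 0 ∧ x = R u / ‖u‖}

theorem compatibilityConstant_nonneg (R : Seminorm ℝ E) (B : Submodule ℝ E) :
    0 ≤ compatibilityConstant R B :=
  Real.sSup_nonneg fun _ ⟨u, _, _, hx⟩ => hx ▸ div_nonneg (apply_nonneg R u) (norm_nonneg u)

variable [FiniteDimensional ℝ E]

theorem bddAbove_ratio_norm (R : Seminorm ℝ E) (B : Submodule ℝ E) :
    BddAbove {x : ℝ | ∃ u ∈ B, u ≠ 0 ∧ x = R u / ‖u‖} := by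
  obtain ⟨C, -, hC⟩ := R.exists_le_mul_norm_of_finiteDimensional
  refine ⟨C, fun _ ⟨u, _, hu, hx⟩ => ?_⟩
  rw [hx, div_le_iff₀ (norm_pos_iff.mpr hu)]
  exact hC u

theorem le_compatibilityConstant_mul_norm (R : Seminorm ℝ E) {B : Submodule ℝ E} {u : E}
    (hu : u ∈ B) : R u ≤ compatibilityConstant R B * ‖u‖ := by
  rcases eq_or_ne u 0 with rfl | hu0
  · simp
  have hratio : R u / ‖u‖ ≤ compatibilityConstant R B :=
    le_csSup (bddAbove_ratio_norm R B) ⟨u, hu, hu0, rfl⟩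
  rwa [div_le_iff₀ (norm_pos_iff.mpr hu0)] at hratio

theorem le_four_mul_compatibilityConstant_mul_norm (R : Seminorm ℝ E) (B : Submodule ℝ E)
    {Δ : E} (hΔ : R (Bᗮ.starProjection Δ) ≤ 3 * R (B.starProjection Δ)) :
    R Δ ≤ 4 * compatibilityConstant R B * ‖Δ‖ :=
  calc R Δ = R (B.starProjection Δ + Bᗮ.starProjection Δ) := by
        rw [starProjection_add_starProjection_orthogonal]
    _ ≤ R (B.starProjection Δ) + R (Bᗮ.starProjection Δ) := map_add_le_add R _ _
    _ ≤ 4 * R (B.starProjection Δ) := by linarith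
    _ ≤ 4 * (compatibilityConstant R B * ‖B.starProjection Δ‖) := by
        gcongr
        exact le_compatibilityConstant_mul_norm R (B.starProjection_apply_mem Δ)
    _ ≤ 4 * compatibilityConstant R B * ‖Δ‖ := by
        rw [← mul_assoc]
        gcongr
        · exact mul_nonneg zero_le_four (compatibilityConstant_nonneg R B)
        · exact B.norm_starProjection_apply_le Δ

end CompatibilityConstant

theorem sub_mul_sq_mul_le_of_le_mul {r t c k κ δ : ℝ} (hr : 0 ≤ r) (hrt : r ≤ c * t) (hk : 0 ≤ k)
    (hδ : δ ≥ κ * t ^ 2 - k * r ^ 2) : δ ≥ (κ - k * c ^ 2) * t ^ 2 := by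
  have hsq : r ^ 2 ≤ (c * t) ^ 2 := pow_le_pow_left₀ hr hrt 2
  nlinarith [mul_le_mul_of_nonneg_left hsq hk]

theorem compatibility_implies_rsc_general (p : ℕ) (R : EuclideanSpace ℝ (Fin p) → ℝ)
    (hR_add : ∀ x y, R (x + y) ≤ R x + R y)
    (hR_smul : ∀ (c : ℝ) (x), R (c • x) = |c| * R x)
    (B : Submodule ℝ (EuclideanSpace ℝ (Fin p)))
    (Δ : EuclideanSpace ℝ (Fin p))
    (hΔ : R ((Submodule.orthogonalProjection Bᗮ Δ : EuclideanSpace ℝ (Fin p))) ≤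
      3 * R ((Submodule.orthogonalProjection B Δ : EuclideanSpace ℝ (Fin p)))) :
    R Δ ≤ 4 * sSup {x : ℝ | ∃ u ∈ B, u ≠ 0 ∧ x = R u / ‖u‖} * ‖Δ‖ ∧
      ∀ δL κ₁ κ₂ g : ℝ, 0 ≤ κ₂ → 0 ≤ g →
        δL ≥ κ₁ * ‖Δ‖ ^ 2 - κ₂ * g * (R Δ) ^ 2 →
        δL ≥ (κ₁ - 16 * κ₂ *
            (sSup {x : ℝ | ∃ u ∈ B, u ≠ 0 ∧ x = R u / ‖u‖}) ^ 2 * g) *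
          ‖Δ‖ ^ 2 := by
  let Rₛ : Seminorm ℝ (EuclideanSpace ℝ (Fin p)) :=
    Seminorm.of R hR_add fun c x => by rw [hR_smul, Real.norm_eq_abs]
  have hbound : R Δ ≤ 4 * compatibilityConstant R B * ‖Δ‖ :=
    le_four_mul_compatibilityConstant_mul_norm Rₛ B hΔ
  refine ⟨hbound, fun δL κ₁ κ₂ g hκ₂ hg hδL => ?_⟩
  have h := sub_mul_sq_mul_le_of_le_mul (apply_nonneg Rₛ Δ) hbound (mul_nonneg hκ₂ hg) hδL
  unfold compatibilityConstant at h
  linarith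

/-- If `θ* ∈ M ⊆ B` and `Δ` satisfies `R(Π_{Bᗮ}Δ) ≤ 3R(Π_B Δ)`, then
`R(Δ) ≤ 4Ψ(B)‖Δ‖`; consequently any lower bound
`δL ≥ κ₁‖Δ‖² − κ₂ g R(Δ)²` implies `δL ≥ (κ₁ − 16κ₂Ψ(B)²g)‖Δ‖²`. -/
theorem compatibility_implies_rsc (p : ℕ) (R : EuclideanSpace ℝ (Fin p) → ℝ)
    (hR_nonneg : ∀ x, 0 ≤ R x)
    (hR_add : ∀ x y, R (x + y) ≤ R x + R y)
    (hR_smul : ∀ (c : ℝ) (x), R (c • x) = |c| * R x)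
    (hR_def : ∀ x, R x = 0 ↔ x = 0)
    (M B : Submodule ℝ (EuclideanSpace ℝ (Fin p))) (hMB : M ≤ B)
    (θs : EuclideanSpace ℝ (Fin p)) (hθs : θs ∈ M)
    (Δ : EuclideanSpace ℝ (Fin p))
    (hΔ : R ((Submodule.orthogonalProjection Bᗮ Δ : EuclideanSpace ℝ (Fin p))) ≤
      3 * R ((Submodule.orthogonalProjection B Δ : EuclideanSpace ℝ (Fin p)))) :
    R Δ ≤ 4 * sSup {x : ℝ | ∃ u ∈ B, u ≠ 0 ∧ x = R u / ‖u‖} * ‖Δ‖ ∧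
      ∀ δL κ₁ κ₂ g : ℝ, 0 ≤ κ₂ → 0 ≤ g →
        δL ≥ κ₁ * ‖Δ‖ ^ 2 - κ₂ * g * (R Δ) ^ 2 →
        δL ≥ (κ₁ - 16 * κ₂ *
            (sSup {x : ℝ | ∃ u ∈ B, u ≠ 0 ∧ x = R u / ‖u‖}) ^ 2 * g) *
          ‖Δ‖ ^ 2 :=
  compatibility_implies_rsc_general p R hR_add hR_smul B Δ hΔ
end
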